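/- arXiv:2006.13659 — 3 statements merged into one kernel-verified Lean document; each statement's English description precedes it below -/
import Mathlib

section
/- Lemma 5 (Convergence for non-transmitted hypotheses). Run the partial-information algorithm with self-awareness, under Assumptions 1 and 2. For θ, θ′ ∈ Θ∖{θ_TX}, define q_{k,i}(θ,θ′) := log(μ_{k,i}(θ)/μ_{k,i}(θ′)). Then for every agent k there exists a random variable q_{k,∞}(θ,θ′), namely the almost surely convergent random series q_{k,∞}(θ,θ′) = Σ_{j=1}^∞ a_{kk}^j log(L_k(ξ_{k,j}|θ)/L_k(ξ_{k,j}|θ′)), such that q_{k,i}(θ,θ′) converges in distribution to q_{k,∞}(θ,θ′) as i → ∞. -/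
/-!
Because agents only transmit their belief about `θTX`, every neighbour spreads its remaining mass
uniformly over the other hypotheses, so for `θ, θ' ≠ θTX` the neighbours' terms cancel in the
log-ratio `q_i` of agent `k`. What is left is the linear recursion
`q_{i+1} = a (q_i + λ_{i+1})` driven by the log-likelihood ratios `λ_j` of the agent's own
i.i.d. signals, whose solution is `a^i q_0 + ∑_{j<i} a^{j+1} λ_{i-j}`. Reversing the order of the
i.i.d. sample does not change the law, so `q_i` has the law of the forward sum
`a^i q_0 + ∑_{j<i} a^{j+1} λ_{j+1}`, which converges almost surely because the `λ_j` have a common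
finite first moment (Assumption 1) and `0 < a < 1`. Almost sure convergence of the forward sums
gives convergence in distribution of `q_i`.
-/

open MeasureTheory ProbabilityTheory Filter Topology Finset
open scoped ENNReal

theorem Finset.sum_Icc_one_eq_sum_range {M : Type*} [AddCommMonoid M] (f : ℕ → M) (n : ℕ) :
    ∑ j ∈ Icc 1 n, f j = ∑ j ∈ range n, f (j + 1) := by
  rw [← Ico_add_one_right_eq_Icc, sum_Ico_eq_sum_range]
  simp [add_comm]

theorem eq_pow_mul_add_sum_of_succ {q y : ℕ → ℝ} {r : ℝ} (h : ∀ i, q (i + 1) = r * (q i + y i))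
    (n : ℕ) : q n = r ^ n * q 0 + ∑ j ∈ range n, r ^ (j + 1) * y (n - 1 - j) := by
  induction n with
  | zero => simp
  | succ n ih =>
    have hshift : ∀ j ∈ range n, r ^ (j + 1 + 1) * y (n + 1 - 1 - (j + 1))
        = r * (r ^ (j + 1) * y (n - 1 - j)) := fun j _ => by
      rw [pow_succ, Nat.add_sub_cancel, Nat.sub_sub, add_comm 1 j]; ring
    rw [h, ih, sum_range_succ', sum_congr rfl hshift, ← mul_sum, Nat.add_sub_cancel, zero_add,
      Nat.sub_zero]
    ring

theorem log_div_exp_div_sum_exp {ι : Type*} [Fintype ι] (E : ι → ℝ) (θ θ' : ι) :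
    Real.log ((Real.exp (E θ) / ∑ t, Real.exp (E t)) / (Real.exp (E θ') / ∑ t, Real.exp (E t)))
      = E θ - E θ' := by
  have hZ : ∑ t, Real.exp (E t) ≠ 0 :=
    (sum_pos (fun t _ => Real.exp_pos _) ⟨θ, mem_univ _⟩).ne'
  rw [div_div_div_cancel_right₀ hZ, ← Real.exp_sub, Real.log_exp]

theorem log_div_mul_div_sum_mul {ι : Type*} [Fintype ι] {μ L : ι → ℝ} (hμ : ∀ t, 0 < μ t)
    (hL : ∀ t, 0 < L t) (θ θ' : ι) :
    Real.log ((μ θ * L θ / ∑ t, μ t * L t) / (μ θ' * L θ' / ∑ t, μ t * L t))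
      = Real.log (μ θ / μ θ') + Real.log (L θ / L θ') := by
  have hZ : ∑ t, μ t * L t ≠ 0 :=
    (sum_pos (fun t _ => mul_pos (hμ t) (hL t)) ⟨θ, mem_univ _⟩).ne'
  rw [div_div_div_cancel_right₀ hZ, mul_div_mul_comm,
    Real.log_mul (div_pos (hμ θ) (hμ θ')).ne' (div_pos (hL θ) (hL θ')).ne']

theorem log_div_of_pool_of_bayes {ι : Type*} [Fintype ι] {μ L ψ μ' s : ι → ℝ} {a : ℝ}
    (hμ : ∀ t, 0 < μ t) (hL : ∀ t, 0 < L t) (hψ : ∀ t, ψ t = μ t * L t / ∑ u, μ u * L u)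
    (hμ' : ∀ t, μ' t = Real.exp (a * Real.log (ψ t) + s t) /
      ∑ u, Real.exp (a * Real.log (ψ u) + s u))
    {θ θ' : ι} (hs : s θ = s θ') :
    Real.log (μ' θ / μ' θ') = a * (Real.log (μ θ / μ θ') + Real.log (L θ / L θ')) := by
  have hψ_pos : ∀ t, 0 < ψ t := fun t => hψ t ▸
    div_pos (mul_pos (hμ t) (hL t)) (sum_pos (fun u _ => mul_pos (hμ u) (hL u)) ⟨t, mem_univ _⟩)
  rw [hμ', hμ', log_div_exp_div_sum_exp (fun t => a * Real.log (ψ t) + s t), hs,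
    ← log_div_mul_div_sum_mul hμ hL, ← hψ, ← hψ, Real.log_div (hψ_pos θ).ne' (hψ_pos θ').ne']
  ring

theorem log_div_eq_pow_mul_add_sum_of_pool_of_bayes {ι : Type*} [Fintype ι]
    {μ ψ L s : ℕ → ι → ℝ} {a : ℝ} (hμ₀ : ∀ t, 0 < μ 0 t) (hL : ∀ i t, 0 < L i t)
    (hψ : ∀ i t, ψ (i + 1) t = μ i t * L i t / ∑ u, μ i u * L i u)
    (hμ : ∀ i t, μ (i + 1) t = Real.exp (a * Real.log (ψ (i + 1) t) + s i t) /
      ∑ u, Real.exp (a * Real.log (ψ (i + 1) u) + s i u))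
    {θ θ' : ι} (hs : ∀ i, s i θ = s i θ') (n : ℕ) :
    Real.log (μ n θ / μ n θ') = a ^ n * Real.log (μ 0 θ / μ 0 θ')
      + ∑ j ∈ range n, a ^ (j + 1) * Real.log (L (n - 1 - j) θ / L (n - 1 - j) θ') := by
  have hμ_pos : ∀ i t, 0 < μ i t := by
    rintro (_ | i) t
    · exact hμ₀ t
    · rw [hμ]
      exact div_pos (Real.exp_pos _) (sum_pos (fun _ _ => Real.exp_pos _) ⟨t, mem_univ _⟩)
  exact eq_pow_mul_add_sum_of_succ (q := fun i => Real.log (μ i θ / μ i θ'))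
    (y := fun i => Real.log (L i θ / L i θ')) (fun i =>
      log_div_of_pool_of_bayes (hμ_pos i) (hL i) (hψ i) (hμ i) (hs i)) n

theorem integrable_log_div_withDensity {α : Type*} [MeasurableSpace α] {ν : Measure α}
    {p q r : α → ℝ} (hp : Measurable p) (hp_pos : ∀ x, 0 < p x) (hq_pos : ∀ x, 0 < q x)
    (hr_pos : ∀ x, 0 < r x) (hpq : Integrable (fun x => p x * Real.log (p x / q x)) ν)
    (hpr : Integrable (fun x => p x * Real.log (p x / r x)) ν) :
    Integrable (fun x => Real.log (q x / r x)) (ν.withDensity fun x => ENNReal.ofReal (p x)) := by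
  rw [integrable_withDensity_iff hp.ennreal_ofReal (ae_of_all _ fun _ => ENNReal.ofReal_lt_top)]
  refine (hpr.sub hpq).congr (ae_of_all _ fun x => ?_)
  dsimp only
  rw [Pi.sub_apply, ENNReal.toReal_ofReal (hp_pos x).le,
    Real.log_div (hp_pos x).ne' (hr_pos x).ne', Real.log_div (hp_pos x).ne' (hq_pos x).ne',
    Real.log_div (hq_pos x).ne' (hr_pos x).ne']
  ring

theorem ae_summable_mul_of_eLpNorm_le {Ω : Type*} [MeasurableSpace Ω] {μ : Measure Ω}
    {f : ℕ → Ω → ℝ} (hf : ∀ n, AEStronglyMeasurable (f n) μ) {C : ℝ≥0∞} (hC : C ≠ ∞)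
    (hfC : ∀ n, eLpNorm (f n) 1 μ ≤ C) {c : ℕ → ℝ} (hc : Summable c) :
    ∀ᵐ ω ∂μ, Summable fun n => c n * f n ω := by
  have hnorm : ∑' n, eLpNorm (c n • f n) 1 μ ≠ ∞ := by
    refine ne_top_of_le_ne_top (ENNReal.mul_ne_top
      (tsum_enorm_ne_top_iff_summable_norm.2 hc.norm) hC) ?_
    rw [← ENNReal.tsum_mul_right]
    refine ENNReal.tsum_le_tsum fun n => ?_
    rw [eLpNorm_const_smul]
    gcongr
    exact hfC n
  filter_upwards [summable_norm_of_tsum_eLpNorm_ne_top le_rfl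
    (fun n => (hf n).const_smul (c n)) hnorm] with ω hω
  exact hω.of_norm

theorem ae_summable_pow_succ_mul {Ω : Type*} [MeasurableSpace Ω] {P : Measure Ω}
    {Y : ℕ → Ω → ℝ} (hmeas : ∀ i, Measurable (Y i))
    (hlaw : ∀ i j, IdentDistrib (Y i) (Y j) P P) (hint : eLpNorm (Y 0) 1 P ≠ ∞) {r : ℝ}
    (hr : |r| < 1) : ∀ᵐ ω ∂P, Summable fun j => r ^ (j + 1) * Y j ω :=
  ae_summable_mul_of_eLpNorm_le (fun j => (hmeas j).aestronglyMeasurable) hint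
    (fun j => ((hlaw j 0).eLpNorm_eq 1).le)
    ((summable_geometric_of_abs_lt_one hr).mul_left r |>.congr fun j => (pow_succ' r j).symm)

theorem tendsto_integral_comp_of_identDistrib_of_ae_tendsto {Ω E : Type*} [MeasurableSpace Ω]
    {P : Measure Ω} [IsFiniteMeasure P] [TopologicalSpace E] [MeasurableSpace E]
    [OpensMeasurableSpace E] {Y Z : ℕ → Ω → E} {Z' : Ω → E}
    (hYZ : ∀ n, IdentDistrib (Y n) (Z n) P P)
    (hZ : ∀ᵐ ω ∂P, Tendsto (fun n => Z n ω) atTop (𝓝 (Z' ω))) (g : BoundedContinuousFunction E ℝ) :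
    Tendsto (fun n => ∫ ω, g (Y n ω) ∂P) atTop (𝓝 (∫ ω, g (Z' ω) ∂P)) := by
  have hgYZ : ∀ n, ∫ ω, g (Y n ω) ∂P = ∫ ω, g (Z n ω) ∂P := fun n =>
    ((hYZ n).comp g.continuous.measurable).integral_eq
  simp_rw [hgYZ]
  refine tendsto_integral_of_dominated_convergence (fun _ => ‖g‖)
    (fun n => (g.continuous.measurable.comp_aemeasurable
      (hYZ n).aemeasurable_snd).aestronglyMeasurable)
    (integrable_const _) (fun n => ae_of_all _ fun ω => g.norm_coe_le_norm _) ?_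
  filter_upwards [hZ] with ω hω
  exact (g.continuous.tendsto _).comp hω

namespace ProbabilityTheory

variable {Ω ι β : Type*} [MeasurableSpace Ω] [MeasurableSpace β] {P : Measure Ω}
  [IsProbabilityMeasure P]

theorem iIndepFun.identDistrib_comp_injective {Y : ι → Ω → β} (hmeas : ∀ i, Measurable (Y i))
    (hindep : iIndepFun Y P) (hlaw : ∀ i j, IdentDistrib (Y i) (Y j) P P) {κ : Type*} [Fintype κ]
    {e₁ e₂ : κ → ι} (he₁ : e₁.Injective) (he₂ : e₂.Injective) :
    IdentDistrib (fun ω j => Y (e₁ j) ω) (fun ω j => Y (e₂ j) ω) P P := by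
  refine ⟨measurable_pi_lambda _ (fun j => hmeas _) |>.aemeasurable,
    measurable_pi_lambda _ (fun j => hmeas _) |>.aemeasurable, ?_⟩
  rw [(iIndepFun_iff_map_fun_eq_pi_map fun j => (hmeas _).aemeasurable).1 (hindep.precomp he₁),
    (iIndepFun_iff_map_fun_eq_pi_map fun j => (hmeas _).aemeasurable).1 (hindep.precomp he₂)]
  exact congrArg Measure.pi (funext fun j => (hlaw _ _).map_eq)

theorem iIndepFun.identDistrib_sum_range_reverse {Y : ℕ → Ω → ℝ} (hmeas : ∀ i, Measurable (Y i))
    (hindep : iIndepFun Y P) (hlaw : ∀ i j, IdentDistrib (Y i) (Y j) P P) (w : ℕ → ℝ) (n : ℕ) :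
    IdentDistrib (fun ω => ∑ j ∈ range n, w j * Y (n - 1 - j) ω)
      (fun ω => ∑ j ∈ range n, w j * Y j ω) P P := by
  have hrev : Function.Injective fun j : Fin n => n - 1 - j := fun x y hxy => by
    have := x.isLt; have := y.isLt; simp only at hxy; omega
  have hsum : Measurable fun v : Fin n → ℝ => ∑ j : Fin n, w j * v j := by fun_prop
  convert (hindep.identDistrib_comp_injective hmeas hlaw hrev Fin.val_injective).comp hsum
    using 1 <;> ext ω
  · exact (Fin.sum_univ_eq_sum_range (fun j => w j * Y (n - 1 - j) ω) n).symm
  · exact (Fin.sum_univ_eq_sum_range (fun j => w j * Y j ω) n).symm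

theorem iIndepFun.tendsto_integral_reverse_geometric_sum {Y : ℕ → Ω → ℝ}
    (hindep : iIndepFun Y P) (hmeas : ∀ i, Measurable (Y i))
    (hlaw : ∀ i j, IdentDistrib (Y i) (Y j) P P) (hint : eLpNorm (Y 0) 1 P ≠ ∞) {r : ℝ}
    (hr : |r| < 1) (c : ℝ) (g : BoundedContinuousFunction ℝ ℝ) :
    Tendsto (fun n => ∫ ω, g (r ^ n * c + ∑ j ∈ range n, r ^ (j + 1) * Y (n - 1 - j) ω) ∂P)
      atTop (𝓝 (∫ ω, g (∑' j, r ^ (j + 1) * Y j ω) ∂P)) := by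
  refine tendsto_integral_comp_of_identDistrib_of_ae_tendsto
    (Z := fun n ω => r ^ n * c + ∑ j ∈ range n, r ^ (j + 1) * Y j ω) (fun n => ?_) ?_ g
  · exact (hindep.identDistrib_sum_range_reverse hmeas hlaw _ n).comp (measurable_const_add _)
  · filter_upwards [ae_summable_pow_succ_mul hmeas hlaw hint hr] with ω hω
    simpa using ((tendsto_pow_atTop_nhds_zero_of_abs_lt_one hr).mul_const c).add
      hω.hasSum.tendsto_sum_nat

end ProbabilityTheory

theorem convergence_for_nontransmitted_hypotheses_general
    {Ω : Type} [mΩ : MeasurableSpace Ω] (P : Measure Ω) [IsProbabilityMeasure P]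
    (K H : ℕ)
    (X : Fin K → Type) [∀ k, MeasurableSpace (X k)]
    (ν : ∀ k, Measure (X k))
    (L : ∀ k : Fin K, Fin H → X k → ℝ)
    (θ0 : Fin H)
    (hLpos : ∀ k θ x, 0 < L k θ x)
    (hLmeas : ∀ k θ, Measurable (L k θ))
    (ξ : ∀ k : Fin K, ℕ → Ω → X k)
    (hξmeas : ∀ k i, Measurable (ξ k i))
    (hξdist : ∀ k (i : ℕ), 1 ≤ i →
      Measure.map (ξ k i) P = (ν k).withDensity (fun x => ENNReal.ofReal (L k θ0 x)))
    (hξindep : iIndepFun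
      (fun (i : ℕ) (ω : Ω) (k : Fin K) => ξ k (i + 1) ω) P)
    (hKL : ∀ k θ θ',
      Integrable (fun x => L k θ x * Real.log (L k θ x / L k θ' x)) (ν k))
    (a : Fin K → Fin K → ℝ)
    (ha_self : ∀ k, 0 < a k k)
    (ha_lt : ∀ k, a k k < 1)
    (θTX : Fin H)
    (μb ψ ψh : Fin K → ℕ → Fin H → Ω → ℝ)
    (μinit : Fin K → Fin H → ℝ)
    (hμinit_pos : ∀ k θ, 0 < μinit k θ)
    (hμb0 : ∀ k θ ω, μb k 0 θ ω = μinit k θ)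
    (hψ : ∀ k (i : ℕ) θ ω, ψ k (i + 1) θ ω =
      μb k i θ ω * L k θ (ξ k (i + 1) ω) /
        ∑ θ', μb k i θ' ω * L k θ' (ξ k (i + 1) ω))
    (hψh_ntx : ∀ k (i : ℕ) θ ω, θ ≠ θTX →
      ψh k (i + 1) θ ω = (1 - ψ k (i + 1) θTX ω) / ((H : ℝ) - 1))
    (hcomb : ∀ k (i : ℕ) θ ω, μb k (i + 1) θ ω =
      Real.exp (a k k * Real.log (ψ k (i + 1) θ ω) +
          ∑ ℓ ∈ Finset.univ.erase k, a ℓ k * Real.log (ψh ℓ (i + 1) θ ω)) /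
        ∑ θ', Real.exp (a k k * Real.log (ψ k (i + 1) θ' ω) +
          ∑ ℓ ∈ Finset.univ.erase k, a ℓ k * Real.log (ψh ℓ (i + 1) θ' ω)))
    (k : Fin K) (θ θ' : Fin H) (hθ : θ ≠ θTX) (hθ' : θ' ≠ θTX) :
    ∃ qinf : Ω → ℝ,
      (∀ᵐ ω ∂P, Tendsto
        (fun (n : ℕ) => ∑ j ∈ Finset.Icc 1 n,
          (a k k) ^ j * Real.log (L k θ (ξ k j ω) / L k θ' (ξ k j ω)))
        atTop (𝓝 (qinf ω))) ∧
      (∀ g : BoundedContinuousFunction ℝ ℝ,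
        Tendsto (fun (i : ℕ) => ∫ ω, g (Real.log (μb k i θ ω / μb k i θ' ω)) ∂P)
          atTop (𝓝 (∫ ω, g (qinf ω) ∂P))) := by
  set r := a k k
  set llr : X k → ℝ := fun x => Real.log (L k θ x / L k θ' x)
  set Y : ℕ → Ω → ℝ := fun j ω => llr (ξ k (j + 1) ω)
  have hllr : Measurable llr := ((hLmeas k θ).div (hLmeas k θ')).log
  have hY_meas : ∀ j, Measurable (Y j) := fun j => hllr.comp (hξmeas k _)
  have hY_indep : iIndepFun Y P :=
    hξindep.comp (fun _ x => llr (x k)) fun _ => hllr.comp (measurable_pi_apply k)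
  have hY_law : ∀ j, IdentDistrib (Y j) llr P
      ((ν k).withDensity fun x => ENNReal.ofReal (L k θ0 x)) := fun j =>
    ⟨(hY_meas j).aemeasurable, hllr.aemeasurable, by
      rw [← hξdist k (j + 1) (by omega), Measure.map_map hllr (hξmeas k _)]; rfl⟩
  have hY_int : eLpNorm (Y 0) 1 P ≠ ∞ := (hY_law 0).eLpNorm_eq 1 ▸
    (memLp_one_iff_integrable.2 (integrable_log_div_withDensity (hLmeas k θ0) (hLpos k θ0)
      (hLpos k θ) (hLpos k θ') (hKL k θ0 θ) (hKL k θ0 θ'))).eLpNorm_ne_top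
  have hY_iid : ∀ i j, IdentDistrib (Y i) (Y j) P P := fun i j => (hY_law i).trans (hY_law j).symm
  have hr : |r| < 1 := abs_lt.2 ⟨by linarith [ha_self k], ha_lt k⟩
  have hq : ∀ n ω, Real.log (μb k n θ ω / μb k n θ' ω) = r ^ n * Real.log (μinit k θ / μinit k θ')
      + ∑ j ∈ range n, r ^ (j + 1) * Y (n - 1 - j) ω := fun n ω => by
    have hneighbours : ∀ i, ∑ ℓ ∈ univ.erase k, a ℓ k * Real.log (ψh ℓ (i + 1) θ ω)
        = ∑ ℓ ∈ univ.erase k, a ℓ k * Real.log (ψh ℓ (i + 1) θ' ω) := fun i =>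
      sum_congr rfl fun ℓ _ => by rw [hψh_ntx ℓ i θ ω hθ, hψh_ntx ℓ i θ' ω hθ']
    rw [log_div_eq_pow_mul_add_sum_of_pool_of_bayes (μ := fun i t => μb k i t ω)
      (ψ := fun i t => ψ k i t ω) (L := fun i t => L k t (ξ k (i + 1) ω))
      (fun t => hμb0 k t ω ▸ hμinit_pos k t) (fun i t => hLpos k t _) (fun i t => hψ k i t ω)
      (fun i t => hcomb k i t ω) hneighbours, hμb0, hμb0]
  refine ⟨fun ω => ∑' j, r ^ (j + 1) * Y j ω, ?_, fun g => ?_⟩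
  · filter_upwards [ae_summable_pow_succ_mul hY_meas hY_iid hY_int hr] with ω hω
    simpa only [sum_Icc_one_eq_sum_range] using hω.hasSum.tendsto_sum_nat
  · simp_rw [hq]
    exact hY_indep.tendsto_integral_reverse_geometric_sum hY_meas hY_iid hY_int hr _ g

theorem convergence_for_nontransmitted_hypotheses
    {Ω : Type} [mΩ : MeasurableSpace Ω] (P : Measure Ω) [IsProbabilityMeasure P]
    (K H : ℕ) (hK : 0 < K) (hH : 2 ≤ H)
    (X : Fin K → Type) [∀ k, MeasurableSpace (X k)]
    (ν : ∀ k, Measure (X k))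
    (L : ∀ k : Fin K, Fin H → X k → ℝ)
    (θ0 : Fin H)
    (hLpos : ∀ k θ x, 0 < L k θ x)
    (hLmeas : ∀ k θ, Measurable (L k θ))
    (hLdens : ∀ k θ, ∫ x, L k θ x ∂(ν k) = 1)
    (ξ : ∀ k : Fin K, ℕ → Ω → X k)
    (hξmeas : ∀ k i, Measurable (ξ k i))
    (hξdist : ∀ k (i : ℕ), 1 ≤ i →
      Measure.map (ξ k i) P = (ν k).withDensity (fun x => ENNReal.ofReal (L k θ0 x)))
    (hξindep : iIndepFun
      (fun (i : ℕ) (ω : Ω) (k : Fin K) => ξ k (i + 1) ω) P)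
    (hKL : ∀ k θ θ',
      Integrable (fun x => L k θ x * Real.log (L k θ x / L k θ' x)) (ν k))
    (a : Fin K → Fin K → ℝ)
    (ha_nonneg : ∀ ℓ k, 0 ≤ a ℓ k)
    (ha_stoch : ∀ k, ∑ ℓ, a ℓ k = 1)
    (ha_prim : ∃ n : ℕ, ∀ ℓ k, 0 < ((Matrix.of a) ^ n) ℓ k)
    (v : Fin K → ℝ)
    (hv_pos : ∀ ℓ, 0 < v ℓ)
    (hv_sum : ∑ ℓ, v ℓ = 1)
    (hv_eig : ∀ ℓ, ∑ k, a ℓ k * v k = v ℓ)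
    (ha_self : ∀ k, 0 < a k k)
    (ha_lt : ∀ k, a k k < 1)
    (θTX : Fin H)
    (μb ψ ψh : Fin K → ℕ → Fin H → Ω → ℝ)
    (μinit : Fin K → Fin H → ℝ)
    (hμinit_pos : ∀ k θ, 0 < μinit k θ)
    (hμinit_sum : ∀ k, ∑ θ, μinit k θ = 1)
    (hμb0 : ∀ k θ ω, μb k 0 θ ω = μinit k θ)
    (hψ : ∀ k (i : ℕ) θ ω, ψ k (i + 1) θ ω =
      μb k i θ ω * L k θ (ξ k (i + 1) ω) /
        ∑ θ', μb k i θ' ω * L k θ' (ξ k (i + 1) ω))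
    (hψh_tx : ∀ k (i : ℕ) ω, ψh k (i + 1) θTX ω = ψ k (i + 1) θTX ω)
    (hψh_ntx : ∀ k (i : ℕ) θ ω, θ ≠ θTX →
      ψh k (i + 1) θ ω = (1 - ψ k (i + 1) θTX ω) / ((H : ℝ) - 1))
    (hcomb : ∀ k (i : ℕ) θ ω, μb k (i + 1) θ ω =
      Real.exp (a k k * Real.log (ψ k (i + 1) θ ω) +
          ∑ ℓ ∈ Finset.univ.erase k, a ℓ k * Real.log (ψh ℓ (i + 1) θ ω)) /
        ∑ θ', Real.exp (a k k * Real.log (ψ k (i + 1) θ' ω) +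
          ∑ ℓ ∈ Finset.univ.erase k, a ℓ k * Real.log (ψh ℓ (i + 1) θ' ω)))
    (k : Fin K) (θ θ' : Fin H) (hθ : θ ≠ θTX) (hθ' : θ' ≠ θTX) :
    ∃ qinf : Ω → ℝ,
      (∀ᵐ ω ∂P, Tendsto
        (fun (n : ℕ) => ∑ j ∈ Finset.Icc 1 n,
          (a k k) ^ j * Real.log (L k θ (ξ k j ω) / L k θ' (ξ k j ω)))
        atTop (𝓝 (qinf ω))) ∧
      (∀ g : BoundedContinuousFunction ℝ ℝ,
        Tendsto (fun (i : ℕ) => ∫ ω, g (Real.log (μb k i θ ω / μb k i θ' ω)) ∂P)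
          atTop (𝓝 (∫ ω, g (qinf ω) ∂P))) :=
  convergence_for_nontransmitted_hypotheses_general (mΩ := mΩ) P K H X ν L θ0 hLpos hLmeas ξ hξmeas
    hξdist hξindep hKL a ha_self ha_lt θTX μb ψ ψh μinit hμinit_pos hμb0 hψ hψh_ntx hcomb k θ θ' hθ
    hθ'
end

section
/- Lemma 6 (Rejection of one non-transmitted hypothesis implies rejection of all). Run the partial-information algorithm with self-awareness, under Assumptions 1 and 2. If for a given agent k and one non-transmitted hypothesis θ ∈ Θ∖{θ_TX} the belief satisfies μ_{k,i}(θ) → 0 in probability as i → ∞, then for the same agent k, μ_{k,i}(θ′) → 0 in probability for every θ′ ∈ Θ∖{θ, θ_TX}. -/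
/-!
For two non-transmitted hypotheses the neighbours' messages coincide, so the log-ratio
`R i = log μ_{k,i}(θ') - log μ_{k,i}(θ)` obeys `R (i+1) = a_kk (R i + Z (i+1))`, where `Z i` is the
log-likelihood ratio of agent `k`'s own signal. As `a_kk < 1` and `E|Z i|` is a finite constant
(finite KL divergences), `E|R i|` stays bounded; hence `exp (R i)` is bounded in probability and
`μ_{k,i}(θ') = exp (R i) μ_{k,i}(θ)` tends to `0` in probability together with `μ_{k,i}(θ)`.
-/

open MeasureTheory ProbabilityTheory Filter Topology

open scoped ENNReal

section BoundedInProbability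

variable {ι Ω : Type*} [MeasurableSpace Ω]

def BoundedInProbability (P : Measure Ω) (X : ι → Ω → ℝ) : Prop :=
  ∀ η : ℝ≥0∞, 0 < η → ∃ M : ℝ, ∀ i, P {ω | M < |X i ω|} ≤ η

theorem boundedInProbability_of_integral_abs_le {P : Measure Ω} {X : ι → Ω → ℝ} {B : ℝ}
    (hX : ∀ i, Integrable (X i) P) (hB : ∀ i, ∫ ω, |X i ω| ∂P ≤ B) :
    BoundedInProbability P X := by
  intro η hη
  obtain ⟨δ, -, hδ0, hδη⟩ := ENNReal.lt_iff_exists_real_btwn.1 hη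
  have hδ : 0 < δ := ENNReal.ofReal_pos.1 hδ0
  refine ⟨max B 1 / δ, fun i => ?_⟩
  have hM : 0 < max B 1 / δ := by positivity
  have hmarkov := meas_ge_le_lintegral_div (μ := P)
    (ENNReal.measurable_ofReal.comp_aemeasurable (hX i).aemeasurable.abs)
    (ENNReal.ofReal_pos.2 hM).ne' ENNReal.ofReal_ne_top
  simp only [Function.comp_apply, ENNReal.ofReal_le_ofReal_iff (abs_nonneg _),
    ← ofReal_integral_eq_lintegral_ofReal (hX i).abs (Eventually.of_forall fun _ => abs_nonneg _),
    ← ENNReal.ofReal_div_of_pos hM] at hmarkov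
  calc P {ω | max B 1 / δ < |X i ω|}
      ≤ P {ω | max B 1 / δ ≤ |X i ω|} :=
        measure_mono fun ω (hω : max B 1 / δ < |X i ω|) => hω.le
    _ ≤ ENNReal.ofReal ((∫ ω, |X i ω| ∂P) / (max B 1 / δ)) := hmarkov
    _ ≤ ENNReal.ofReal (max B 1 / (max B 1 / δ)) :=
        ENNReal.ofReal_le_ofReal (div_le_div_of_nonneg_right ((hB i).trans (le_max_left _ _)) hM.le)
    _ = ENNReal.ofReal δ := by rw [div_div_cancel₀ (by positivity)]
    _ ≤ η := hδη.le

theorem BoundedInProbability.exp {P : Measure Ω} {X : ι → Ω → ℝ}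
    (hX : BoundedInProbability P X) :
    BoundedInProbability P fun i ω => Real.exp (X i ω) := by
  intro η hη
  obtain ⟨M, hM⟩ := hX η hη
  refine ⟨Real.exp M, fun i => (measure_mono fun ω hω => ?_).trans (hM i)⟩
  simp only [Set.mem_ofPred_eq, abs_of_pos (Real.exp_pos _), Real.exp_lt_exp] at hω ⊢
  exact hω.trans_le (le_abs_self _)

theorem MeasureTheory.TendstoInMeasure.zero_of_abs_le_mul {P : Measure Ω} {l : Filter ι}
    {f c g : ι → Ω → ℝ} (hc : BoundedInProbability P c)
    (hg : TendstoInMeasure P g l fun _ => 0) (hf : ∀ i ω, |f i ω| ≤ |c i ω| * |g i ω|) :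
    TendstoInMeasure P f l fun _ => 0 := by
  simp only [tendstoInMeasure_iff_dist, Real.dist_eq, sub_zero] at hg ⊢
  intro ε hε
  rw [ENNReal.tendsto_nhds_zero]
  intro η hη
  obtain ⟨M, hM⟩ := hc (η / 2) (ENNReal.half_pos hη.ne')
  have hM1 : 0 < max M 1 := lt_max_of_lt_right one_pos
  filter_upwards [ENNReal.tendsto_nhds_zero.1 (hg (ε / max M 1) (by positivity)) (η / 2)
    (ENNReal.half_pos hη.ne')] with i hi
  have hcover : {ω | ε ≤ |f i ω|} ⊆ {ω | M < |c i ω|} ∪ {ω | ε / max M 1 ≤ |g i ω|} := by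
    intro ω hω
    by_contra! hout
    simp only [Set.mem_union, Set.mem_ofPred_eq, not_or, not_lt, not_le] at hω hout
    rw [lt_div_iff₀ hM1] at hout
    nlinarith [hf i ω, abs_nonneg (g i ω), le_max_left M 1]
  calc P {ω | ε ≤ |f i ω|}
      ≤ P {ω | M < |c i ω|} + P {ω | ε / max M 1 ≤ |g i ω|} :=
        (measure_mono hcover).trans (measure_union_le _ _)
    _ ≤ η / 2 + η / 2 := add_le_add (hM i) hi
    _ = η := ENNReal.add_halves η

end BoundedInProbability

theorem le_max_of_le_mul_add {m : ℕ → ℝ} {a C : ℝ} (ha0 : 0 ≤ a) (ha1 : a < 1)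
    (hm : ∀ i, m (i + 1) ≤ a * (m i + C)) (i : ℕ) :
    m i ≤ max (m 0) (a * C / (1 - a)) := by
  induction i with
  | zero => exact le_max_left _ _
  | succ i ih =>
    have hfix : a * C ≤ (1 - a) * max (m 0) (a * C / (1 - a)) := by
      rw [← div_le_iff₀' (by linarith)]
      exact le_max_right _ _
    nlinarith [hm i]

section LinearRecursion

variable {Ω : Type*} [MeasurableSpace Ω] {P : Measure Ω} {R Z : ℕ → Ω → ℝ} {a : ℝ}

theorem integrable_of_rec (hR0 : Integrable (R 0) P) (hZ : ∀ i, Integrable (Z (i + 1)) P)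
    (hrec : ∀ i ω, R (i + 1) ω = a * (R i ω + Z (i + 1) ω)) (i : ℕ) :
    Integrable (R i) P := by
  induction i with
  | zero => exact hR0
  | succ i ih =>
    rw [funext (hrec i)]
    exact (ih.add (hZ i)).const_mul a

theorem integral_abs_le_of_rec {C : ℝ} (ha0 : 0 ≤ a) (ha1 : a < 1) (hR0 : Integrable (R 0) P)
    (hZ : ∀ i, Integrable (Z (i + 1)) P) (hZC : ∀ i, ∫ ω, |Z (i + 1) ω| ∂P ≤ C)
    (hrec : ∀ i ω, R (i + 1) ω = a * (R i ω + Z (i + 1) ω)) (i : ℕ) :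
    ∫ ω, |R i ω| ∂P ≤ max (∫ ω, |R 0 ω| ∂P) (a * C / (1 - a)) := by
  refine le_max_of_le_mul_add (m := fun i => ∫ ω, |R i ω| ∂P) ha0 ha1 (fun i => ?_) i
  have hRi := integrable_of_rec hR0 hZ hrec i
  calc ∫ ω, |R (i + 1) ω| ∂P
      = a * ∫ ω, |R i ω + Z (i + 1) ω| ∂P := by
        simp only [hrec, abs_mul, abs_of_nonneg ha0, integral_const_mul]
    _ ≤ a * ∫ ω, (|R i ω| + |Z (i + 1) ω|) ∂P := by
        gcongr
        exacts [(hRi.add (hZ i)).abs, hRi.abs.add (hZ i).abs, abs_add_le _ _]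
    _ ≤ a * (∫ ω, |R i ω| ∂P + C) := by
        rw [integral_add hRi.abs (hZ i).abs]
        gcongr
        exact hZC i

end LinearRecursion

theorem log_div_sub_log_div {x y z : ℝ} (hx : x ≠ 0) (hy : y ≠ 0) (hz : z ≠ 0) :
    Real.log (x / z) - Real.log (y / z) = Real.log x - Real.log y := by
  rw [Real.log_div hx hz, Real.log_div hy hz]
  ring

theorem log_softmax_sub_log_softmax {ι : Type*} [Fintype ι] (s : ι → ℝ) (x y : ι) :
    Real.log (Real.exp (s x) / ∑ z, Real.exp (s z)) -
      Real.log (Real.exp (s y) / ∑ z, Real.exp (s z)) = s x - s y := by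
  rw [log_div_sub_log_div (Real.exp_ne_zero _) (Real.exp_ne_zero _)
    (Finset.sum_pos (fun z _ => Real.exp_pos (s z)) ⟨x, Finset.mem_univ x⟩).ne',
    Real.log_exp, Real.log_exp]

theorem log_bayes_sub_log_bayes {ι : Type*} [Fintype ι] {μ L : ι → ℝ} (hμ : ∀ z, 0 < μ z)
    (hL : ∀ z, 0 < L z) (x y : ι) :
    Real.log (μ x * L x / ∑ z, μ z * L z) - Real.log (μ y * L y / ∑ z, μ z * L z) =
      (Real.log (μ x) - Real.log (μ y)) + (Real.log (L x) - Real.log (L y)) := by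
  rw [log_div_sub_log_div (mul_pos (hμ x) (hL x)).ne' (mul_pos (hμ y) (hL y)).ne'
    (Finset.sum_pos (fun z _ => mul_pos (hμ z) (hL z)) ⟨x, Finset.mem_univ x⟩).ne',
    Real.log_mul (hμ x).ne' (hL x).ne', Real.log_mul (hμ y).ne' (hL y).ne']
  ring

theorem integrable_log_sub_log_withDensity {α : Type*} [MeasurableSpace α] {ν : Measure α}
    {p q r : α → ℝ} (hp : ∀ x, 0 < p x) (hq : ∀ x, 0 < q x) (hr : ∀ x, 0 < r x)
    (hpm : Measurable p) (hpq : Integrable (fun x => p x * Real.log (p x / q x)) ν)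
    (hpr : Integrable (fun x => p x * Real.log (p x / r x)) ν) :
    Integrable (fun x => Real.log (r x) - Real.log (q x))
      (ν.withDensity fun x => ENNReal.ofReal (p x)) := by
  rw [integrable_withDensity_iff hpm.ennreal_ofReal
    (Eventually.of_forall fun _ => ENNReal.ofReal_lt_top)]
  refine (hpq.sub hpr).congr (Eventually.of_forall fun x => ?_)
  dsimp only [Pi.sub_apply]
  rw [ENNReal.toReal_ofReal (hp x).le, Real.log_div (hp x).ne' (hq x).ne',
    Real.log_div (hp x).ne' (hr x).ne']
  ring

theorem pos_of_softmax_rec {ι : Type*} [Fintype ι] {μ s : ℕ → ι → ℝ} (h0 : ∀ x, 0 < μ 0 x)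
    (hs : ∀ i x, μ (i + 1) x = Real.exp (s i x) / ∑ z, Real.exp (s i z)) :
    ∀ i x, 0 < μ i x
  | 0, x => h0 x
  | i + 1, x => by
    rw [hs]
    exact div_pos (Real.exp_pos _)
      (Finset.sum_pos (fun z _ => Real.exp_pos (s i z)) ⟨x, Finset.mem_univ x⟩)

/-- Neighbours only share their belief in `θTX`, spread evenly over the other hypotheses, so their
contribution cancels in the log-ratio of two non-transmitted hypotheses. -/
theorem log_belief_ratio_succ {Ω : Type*} {K H : ℕ} {X : Fin K → Type*}
    {L : ∀ k : Fin K, Fin H → X k → ℝ} {ξ : ∀ k : Fin K, ℕ → Ω → X k} {a : Fin K → Fin K → ℝ}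
    {θTX : Fin H} {μb ψ ψh : Fin K → ℕ → Fin H → Ω → ℝ}
    (hLpos : ∀ k θ x, 0 < L k θ x)
    (hψ : ∀ k (i : ℕ) θ ω, ψ k (i + 1) θ ω =
      μb k i θ ω * L k θ (ξ k (i + 1) ω) /
        ∑ θ', μb k i θ' ω * L k θ' (ξ k (i + 1) ω))
    (hψh_ntx : ∀ k (i : ℕ) θ ω, θ ≠ θTX →
      ψh k (i + 1) θ ω = (1 - ψ k (i + 1) θTX ω) / ((H : ℝ) - 1))
    (hcomb : ∀ k (i : ℕ) θ ω, μb k (i + 1) θ ω =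
      Real.exp (a k k * Real.log (ψ k (i + 1) θ ω) +
          ∑ ℓ ∈ Finset.univ.erase k, a ℓ k * Real.log (ψh ℓ (i + 1) θ ω)) /
        ∑ θ', Real.exp (a k k * Real.log (ψ k (i + 1) θ' ω) +
          ∑ ℓ ∈ Finset.univ.erase k, a ℓ k * Real.log (ψh ℓ (i + 1) θ' ω)))
    {k : Fin K} {i : ℕ} {ω : Ω} (hμpos : ∀ θ, 0 < μb k i θ ω)
    {θ θ' : Fin H} (hθ : θ ≠ θTX) (hθ' : θ' ≠ θTX) :
    Real.log (μb k (i + 1) θ' ω) - Real.log (μb k (i + 1) θ ω) =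
      a k k * ((Real.log (μb k i θ' ω) - Real.log (μb k i θ ω)) +
        (Real.log (L k θ' (ξ k (i + 1) ω)) - Real.log (L k θ (ξ k (i + 1) ω)))) := by
  have hcombine := log_softmax_sub_log_softmax (fun η => a k k * Real.log (ψ k (i + 1) η ω) +
    ∑ ℓ ∈ Finset.univ.erase k, a ℓ k * Real.log (ψh ℓ (i + 1) η ω)) θ' θ
  have hbayes := log_bayes_sub_log_bayes (μ := fun η => μb k i η ω)
    (L := fun η => L k η (ξ k (i + 1) ω)) hμpos (fun η => hLpos k η _) θ' θ
  have hshared : ∀ ℓ, ψh ℓ (i + 1) θ' ω = ψh ℓ (i + 1) θ ω := fun ℓ => by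
    rw [hψh_ntx ℓ i θ' ω hθ', hψh_ntx ℓ i θ ω hθ]
  rw [← hcomb, ← hcomb] at hcombine
  rw [← hψ, ← hψ] at hbayes
  rw [hcombine, ← hbayes]
  simp only [hshared]
  ring

theorem rejection_of_one_nontransmitted_implies_rejection_of_all_general
    {Ω : Type} [mΩ : MeasurableSpace Ω] (P : Measure Ω) [IsProbabilityMeasure P]
    (K H : ℕ)
    (X : Fin K → Type) [∀ k, MeasurableSpace (X k)]
    (ν : ∀ k, Measure (X k))
    (L : ∀ k : Fin K, Fin H → X k → ℝ)
    (θ0 : Fin H)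
    (hLpos : ∀ k θ x, 0 < L k θ x)
    (hLmeas : ∀ k θ, Measurable (L k θ))
    (ξ : ∀ k : Fin K, ℕ → Ω → X k)
    (hξmeas : ∀ k i, Measurable (ξ k i))
    (hξdist : ∀ k (i : ℕ), 1 ≤ i →
      Measure.map (ξ k i) P = (ν k).withDensity (fun x => ENNReal.ofReal (L k θ0 x)))
    (hKL : ∀ k θ θ',
      Integrable (fun x => L k θ x * Real.log (L k θ x / L k θ' x)) (ν k))
    (a : Fin K → Fin K → ℝ)
    (ha_self : ∀ k, 0 < a k k)
    (ha_lt : ∀ k, a k k < 1)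
    (θTX : Fin H)
    (μb ψ ψh : Fin K → ℕ → Fin H → Ω → ℝ)
    (μinit : Fin K → Fin H → ℝ)
    (hμinit_pos : ∀ k θ, 0 < μinit k θ)
    (hμb0 : ∀ k θ ω, μb k 0 θ ω = μinit k θ)
    (hψ : ∀ k (i : ℕ) θ ω, ψ k (i + 1) θ ω =
      μb k i θ ω * L k θ (ξ k (i + 1) ω) /
        ∑ θ', μb k i θ' ω * L k θ' (ξ k (i + 1) ω))
    (hψh_ntx : ∀ k (i : ℕ) θ ω, θ ≠ θTX →
      ψh k (i + 1) θ ω = (1 - ψ k (i + 1) θTX ω) / ((H : ℝ) - 1))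
    (hcomb : ∀ k (i : ℕ) θ ω, μb k (i + 1) θ ω =
      Real.exp (a k k * Real.log (ψ k (i + 1) θ ω) +
          ∑ ℓ ∈ Finset.univ.erase k, a ℓ k * Real.log (ψh ℓ (i + 1) θ ω)) /
        ∑ θ', Real.exp (a k k * Real.log (ψ k (i + 1) θ' ω) +
          ∑ ℓ ∈ Finset.univ.erase k, a ℓ k * Real.log (ψh ℓ (i + 1) θ' ω)))
    (k : Fin K) (θ : Fin H) (hθ : θ ≠ θTX)
    (hreject : TendstoInMeasure P (fun (i : ℕ) ω => μb k i θ ω) atTop (fun _ => (0 : ℝ))) :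
    ∀ θ' : Fin H, θ' ≠ θ → θ' ≠ θTX →
      TendstoInMeasure P (fun (i : ℕ) ω => μb k i θ' ω) atTop (fun _ => (0 : ℝ)) := by
  intro θ' _ hθ'
  have hμpos : ∀ i θ ω, 0 < μb k i θ ω := fun i θ ω =>
    pos_of_softmax_rec (μ := fun i θ => μb k i θ ω) (fun θ => hμb0 k θ ω ▸ hμinit_pos k θ)
      (fun i θ => hcomb k i θ ω) i θ
  set f : X k → ℝ := fun x => Real.log (L k θ' x) - Real.log (L k θ x)
  set Z : ℕ → Ω → ℝ := fun i ω => f (ξ k i ω)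
  set R : ℕ → Ω → ℝ := fun i ω => Real.log (μb k i θ' ω) - Real.log (μb k i θ ω)
  have hrec : ∀ i ω, R (i + 1) ω = a k k * (R i ω + Z (i + 1) ω) := fun i ω =>
    log_belief_ratio_succ hLpos hψ hψh_ntx hcomb (hμpos i · ω) hθ hθ'
  have hlaw : ∀ i, Measure.map (ξ k (i + 1)) P =
      (ν k).withDensity fun x => ENNReal.ofReal (L k θ0 x) :=
    fun i => hξdist k (i + 1) i.succ_pos
  have hf : Integrable f ((ν k).withDensity fun x => ENNReal.ofReal (L k θ0 x)) :=
    integrable_log_sub_log_withDensity (hLpos k θ0) (hLpos k θ) (hLpos k θ') (hLmeas k θ0)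
      (hKL k θ0 θ) (hKL k θ0 θ')
  have hZ : ∀ i, Integrable (Z (i + 1)) P := fun i =>
    ((hlaw i).symm ▸ hf).comp_measurable (hξmeas k (i + 1))
  have hZC : ∀ i, ∫ ω, |Z (i + 1) ω| ∂P =
      ∫ x, |f x| ∂((ν k).withDensity fun x => ENNReal.ofReal (L k θ0 x)) := fun i => by
    rw [← hlaw i, integral_map (hξmeas k (i + 1)).aemeasurable ((hlaw i).symm ▸ hf.abs).1]
  have hR0 : Integrable (R 0) P := by simp only [R, hμb0]; exact integrable_const _
  have hRbdd : BoundedInProbability P R :=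
    boundedInProbability_of_integral_abs_le (integrable_of_rec hR0 hZ hrec)
      (integral_abs_le_of_rec (ha_self k).le (ha_lt k) hR0 hZ (fun i => (hZC i).le) hrec)
  refine hreject.zero_of_abs_le_mul hRbdd.exp fun i ω => le_of_eq ?_
  rw [← abs_mul, Real.exp_sub, Real.exp_log (hμpos i θ' ω), Real.exp_log (hμpos i θ ω),
    div_mul_cancel₀ _ (hμpos i θ ω).ne']

theorem rejection_of_one_nontransmitted_implies_rejection_of_all
    {Ω : Type} [mΩ : MeasurableSpace Ω] (P : Measure Ω) [IsProbabilityMeasure P]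
    (K H : ℕ) (hK : 0 < K) (hH : 2 ≤ H)
    (X : Fin K → Type) [∀ k, MeasurableSpace (X k)]
    (ν : ∀ k, Measure (X k))
    (L : ∀ k : Fin K, Fin H → X k → ℝ)
    (θ0 : Fin H)
    (hLpos : ∀ k θ x, 0 < L k θ x)
    (hLmeas : ∀ k θ, Measurable (L k θ))
    (hLdens : ∀ k θ, ∫ x, L k θ x ∂(ν k) = 1)
    (ξ : ∀ k : Fin K, ℕ → Ω → X k)
    (hξmeas : ∀ k i, Measurable (ξ k i))
    (hξdist : ∀ k (i : ℕ), 1 ≤ i →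
      Measure.map (ξ k i) P = (ν k).withDensity (fun x => ENNReal.ofReal (L k θ0 x)))
    (hξindep : iIndepFun
      (fun (i : ℕ) (ω : Ω) (k : Fin K) => ξ k (i + 1) ω) P)
    (hKL : ∀ k θ θ',
      Integrable (fun x => L k θ x * Real.log (L k θ x / L k θ' x)) (ν k))
    (a : Fin K → Fin K → ℝ)
    (ha_nonneg : ∀ ℓ k, 0 ≤ a ℓ k)
    (ha_stoch : ∀ k, ∑ ℓ, a ℓ k = 1)
    (ha_prim : ∃ n : ℕ, ∀ ℓ k, 0 < ((Matrix.of a) ^ n) ℓ k)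
    (v : Fin K → ℝ)
    (hv_pos : ∀ ℓ, 0 < v ℓ)
    (hv_sum : ∑ ℓ, v ℓ = 1)
    (hv_eig : ∀ ℓ, ∑ k, a ℓ k * v k = v ℓ)
    (ha_self : ∀ k, 0 < a k k)
    (ha_lt : ∀ k, a k k < 1)
    (θTX : Fin H)
    (μb ψ ψh : Fin K → ℕ → Fin H → Ω → ℝ)
    (μinit : Fin K → Fin H → ℝ)
    (hμinit_pos : ∀ k θ, 0 < μinit k θ)
    (hμinit_sum : ∀ k, ∑ θ, μinit k θ = 1)
    (hμb0 : ∀ k θ ω, μb k 0 θ ω = μinit k θ)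
    (hψ : ∀ k (i : ℕ) θ ω, ψ k (i + 1) θ ω =
      μb k i θ ω * L k θ (ξ k (i + 1) ω) /
        ∑ θ', μb k i θ' ω * L k θ' (ξ k (i + 1) ω))
    (hψh_tx : ∀ k (i : ℕ) ω, ψh k (i + 1) θTX ω = ψ k (i + 1) θTX ω)
    (hψh_ntx : ∀ k (i : ℕ) θ ω, θ ≠ θTX →
      ψh k (i + 1) θ ω = (1 - ψ k (i + 1) θTX ω) / ((H : ℝ) - 1))
    (hcomb : ∀ k (i : ℕ) θ ω, μb k (i + 1) θ ω =
      Real.exp (a k k * Real.log (ψ k (i + 1) θ ω) +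
          ∑ ℓ ∈ Finset.univ.erase k, a ℓ k * Real.log (ψh ℓ (i + 1) θ ω)) /
        ∑ θ', Real.exp (a k k * Real.log (ψ k (i + 1) θ' ω) +
          ∑ ℓ ∈ Finset.univ.erase k, a ℓ k * Real.log (ψh ℓ (i + 1) θ' ω)))
    (k : Fin K) (θ : Fin H) (hθ : θ ≠ θTX)
    (hreject : TendstoInMeasure P (fun (i : ℕ) ω => μb k i θ ω) atTop (fun _ => (0 : ℝ))) :
    ∀ θ' : Fin H, θ' ≠ θ → θ' ≠ θTX →
      TendstoInMeasure P (fun (i : ℕ) ω => μb k i θ' ω) atTop (fun _ => (0 : ℝ)) :=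
  rejection_of_one_nontransmitted_implies_rejection_of_all_general (mΩ := mΩ) P K H X ν L θ0 hLpos
    hLmeas ξ hξmeas hξdist hKL a ha_self ha_lt θTX μb ψ ψh μinit hμinit_pos hμb0 hψ hψh_ntx hcomb k
    θ hθ hreject
end

section
/- Lemma 8 (Main vector recursion). Let A be a K×K primitive left-stochastic matrix (1ᵀA = 1ᵀ, entries ≥ 0) satisfying lim_{i→∞} A^i = v 1ᵀ for a vector v with positive entries and 1ᵀv = 1. Let (x_i)_{i≥1} be a sequence of random vectors in ℝ^K and x̄ ∈ ℝ^K a deterministic vector such that, component-wise for every ℓ: (a) (1/i) Σ_{j=1}^i x_{ℓ,j} → x̄_ℓ almost surely; (b) limsup_{i→∞} (1/i) Σ_{j=1}^i |x_{ℓ,j}| < ∞ almost surely; (c) for every fixed i₀, (1/i) Σ_{j=i−i₀}^i x_{ℓ,j} → 0 almost surely. Define the random vectors y_i by y_i = Aᵀ y_{i−1} + x_i for i ≥ 1, with deterministic finite initial vector y₀. Then (1/i) y_i → (vᵀ x̄) · 1 almost surely, i.e., every component of y_i/i converges almost surely to Σ_{ℓ} v_ℓ x̄_ℓ. -/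
open MeasureTheory ProbabilityTheory Filter Topology
open Matrix

lemma pow_entry_props {K : ℕ} (A : Matrix (Fin K) (Fin K) ℝ)
    (hA_nonneg : ∀ ℓ k, 0 ≤ A ℓ k) (hA_stoch : ∀ k, ∑ ℓ, A ℓ k = 1) (n : ℕ) :
    (∀ ℓ k, 0 ≤ (A ^ n) ℓ k) ∧ (∀ k, ∑ ℓ, (A ^ n) ℓ k = 1) := by
  induction n with
  | zero =>
    refine ⟨fun ℓ k => ?_, fun k => ?_⟩
    · rw [pow_zero]
      by_cases h : ℓ = k <;> simp [Matrix.one_apply, h]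
    · rw [pow_zero]
      simp [Matrix.one_apply]
  | succ n ih =>
    obtain ⟨h1, h2⟩ := ih
    constructor
    · intro ℓ k
      rw [pow_succ, Matrix.mul_apply]
      exact Finset.sum_nonneg fun m _ => mul_nonneg (h1 ℓ m) (hA_nonneg m k)
    · intro k
      simp only [pow_succ, Matrix.mul_apply]
      rw [Finset.sum_comm]
      simp_rw [← Finset.sum_mul, h2, one_mul]
      exact hA_stoch k

theorem main_vector_recursion
    {Ω : Type} [MeasurableSpace Ω] (P : Measure Ω) [IsProbabilityMeasure P]
    (K : ℕ) (hK : 0 < K)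
    (A : Matrix (Fin K) (Fin K) ℝ)
    (hA_nonneg : ∀ ℓ k, 0 ≤ A ℓ k)
    (hA_stoch : ∀ k, ∑ ℓ, A ℓ k = 1)
    (hA_prim : ∃ n : ℕ, ∀ ℓ k, 0 < (A ^ n) ℓ k)
    (v : Fin K → ℝ)
    (hv_pos : ∀ ℓ, 0 < v ℓ)
    (hv_sum : ∑ ℓ, v ℓ = 1)
    (hA_lim : Tendsto (fun (n : ℕ) => A ^ n) atTop (𝓝 (Matrix.of fun ℓ _ => v ℓ)))
    (x : ℕ → Ω → Fin K → ℝ)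
    (xbar : Fin K → ℝ)
    (ha : ∀ ℓ, ∀ᵐ ω ∂P,
      Tendsto (fun (i : ℕ) => (1 / (i : ℝ)) * ∑ j ∈ Finset.Icc 1 i, x j ω ℓ)
        atTop (𝓝 (xbar ℓ)))
    (hb : ∀ ℓ, ∀ᵐ ω ∂P,
      IsBoundedUnder (· ≤ ·) atTop
        (fun (i : ℕ) => (1 / (i : ℝ)) * ∑ j ∈ Finset.Icc 1 i, |x j ω ℓ|))
    (hc : ∀ ℓ (i0 : ℕ), ∀ᵐ ω ∂P,
      Tendsto (fun (i : ℕ) => (1 / (i : ℝ)) * ∑ j ∈ Finset.Icc (i - i0) i, x j ω ℓ)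
        atTop (𝓝 0))
    (y : ℕ → Ω → Fin K → ℝ)
    (y0 : Fin K → ℝ)
    (hy0 : ∀ ω, y 0 ω = y0)
    (hy : ∀ (i : ℕ) (ω : Ω), y (i + 1) ω = (Matrix.transpose A).mulVec (y i ω) + x (i + 1) ω) :
    ∀ ℓ, ∀ᵐ ω ∂P,
      Tendsto (fun (i : ℕ) => y i ω ℓ / (i : ℝ)) atTop (𝓝 (∑ m, v m * xbar m)) := by
  -- matrix facts
  have hpow := pow_entry_props A hA_nonneg hA_stoch
  have hpow_nonneg : ∀ n k l, 0 ≤ (A ^ n) k l := fun n => (hpow n).1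
  have hpow_le_one : ∀ n k l, (A ^ n) k l ≤ 1 := by
    intro n k l
    calc (A ^ n) k l ≤ ∑ m, (A ^ n) m l :=
          Finset.single_le_sum (fun m _ => hpow_nonneg n m l) (Finset.mem_univ k)
      _ = 1 := (hpow n).2 l
  have hv_le_one : ∀ k, v k ≤ 1 := fun k =>
    calc v k ≤ ∑ m, v m := Finset.single_le_sum (fun m _ => (hv_pos m).le) (Finset.mem_univ k)
      _ = 1 := hv_sum
  have hentry : ∀ k l, Tendsto (fun n => (A ^ n) k l) atTop (𝓝 (v k)) := by
    intro k l
    have h1 := tendsto_pi_nhds.mp hA_lim k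
    have h2 := tendsto_pi_nhds.mp h1 l
    simpa using h2
  -- explicit solution of the recursion
  have hvec : ∀ (i : ℕ) (ω : Ω), y i ω =
      (Aᵀ ^ i).mulVec y0 + ∑ j ∈ Finset.Icc 1 i, (Aᵀ ^ (i - j)).mulVec (x j ω) := by
    intro i ω
    induction i with
    | zero => simp [hy0]
    | succ i ih =>
      rw [hy i ω, ih, Matrix.mulVec_add]
      have hlin : Aᵀ.mulVec (∑ j ∈ Finset.Icc 1 i, (Aᵀ ^ (i - j)).mulVec (x j ω))
          = ∑ j ∈ Finset.Icc 1 i, (Aᵀ ^ (i + 1 - j)).mulVec (x j ω) := by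
        have := map_sum (Matrix.mulVecLin Aᵀ)
          (fun j => (Aᵀ ^ (i - j)).mulVec (x j ω)) (Finset.Icc 1 i)
        simp only [Matrix.mulVecLin_apply] at this
        rw [this]
        refine Finset.sum_congr rfl fun j hj => ?_
        rcases Finset.mem_Icc.mp hj with ⟨hj1, hj2⟩
        rw [Matrix.mulVec_mulVec, ← pow_succ', show i - j + 1 = i + 1 - j by omega]
      rw [hlin, Matrix.mulVec_mulVec, ← pow_succ']
      rw [Finset.sum_Icc_succ_top (by omega : 1 ≤ i + 1)]
      simp [add_assoc]
  -- component formula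
  have hcomp : ∀ (i : ℕ) (ω : Ω) (l : Fin K), y i ω l =
      (∑ k, (A ^ i) k l * y0 k)
        + ∑ j ∈ Finset.Icc 1 i, ∑ k, (A ^ (i - j)) k l * x j ω k := by
    intro i ω l
    rw [hvec i ω]
    simp only [Pi.add_apply, Finset.sum_apply]
    congr 1
    · rw [← Matrix.transpose_pow]
      simp [Matrix.mulVec, dotProduct, Matrix.transpose_apply]
    · refine Finset.sum_congr rfl fun j hj => ?_
      rw [← Matrix.transpose_pow]
      simp [Matrix.mulVec, dotProduct, Matrix.transpose_apply]
  -- single-term tail limits, a.e.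
  have hIccsplit : ∀ (s i : ℕ), s + 1 ≤ i →
      Finset.Icc (i - (s+1)) i = insert (i - (s+1)) (Finset.Icc (i - s) i) := by
    intro s i hi
    rw [Finset.Icc_eq_cons_Ioc (by omega), Finset.cons_eq_insert]
    congr 1
    rw [← Finset.Icc_add_one_left_eq_Ioc]
    congr 1
    omega
  have hnotmem : ∀ (s i : ℕ), s + 1 ≤ i → i - (s+1) ∉ Finset.Icc (i - s) i := by
    intro s i hi
    simp only [Finset.mem_Icc]
    omega
  have hsingle : ∀ k (s : ℕ), ∀ᵐ ω ∂P,
      Tendsto (fun (i : ℕ) => (1 / (i : ℝ)) * x (i - s) ω k) atTop (𝓝 0) := by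
    intro k s
    induction s with
    | zero =>
      filter_upwards [hc k 0] with ω hω
      simpa using hω
    | succ s _ =>
      filter_upwards [hc k (s+1), hc k s] with ω h1 h2
      have h3 := h1.sub h2
      rw [sub_zero] at h3
      refine h3.congr' ?_
      filter_upwards [eventually_ge_atTop (s+1)] with i hi
      rw [hIccsplit s i hi, Finset.sum_insert (hnotmem s i hi)]
      ring
  -- tail absolute sums tend to 0, a.e.
  have habs : ∀ k (i0 : ℕ), ∀ᵐ ω ∂P,
      Tendsto (fun (i : ℕ) => (1 / (i : ℝ)) * ∑ j ∈ Finset.Icc (i - i0) i, |x j ω k|)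
        atTop (𝓝 0) := by
    intro k i0
    have habs1 : ∀ (s : ℕ) (ω : Ω),
        Tendsto (fun (i : ℕ) => (1 / (i : ℝ)) * x (i - s) ω k) atTop (𝓝 0) →
        Tendsto (fun (i : ℕ) => (1 / (i : ℝ)) * |x (i - s) ω k|) atTop (𝓝 0) := by
      intro s ω hω
      have := hω.abs
      rw [abs_zero] at this
      refine this.congr fun i => ?_
      rw [abs_mul, abs_of_nonneg (by positivity : (0:ℝ) ≤ 1 / (i:ℝ))]
    induction i0 with
    | zero =>
      filter_upwards [hsingle k 0] with ω hω
      have := habs1 0 ω hω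
      refine this.congr fun i => ?_
      simp
    | succ s ih =>
      filter_upwards [ih, hsingle k (s+1)] with ω h1 h2
      have h2' := habs1 (s+1) ω h2
      have h3 := h2'.add h1
      rw [add_zero] at h3
      refine h3.congr' ?_
      filter_upwards [eventually_ge_atTop (s+1)] with i hi
      rw [hIccsplit s i hi, Finset.sum_insert (hnotmem s i hi)]
      ring
  intro l
  have H1 : ∀ᵐ ω ∂P, ∀ k, Tendsto (fun (i : ℕ) => (1 / (i : ℝ)) * ∑ j ∈ Finset.Icc 1 i, x j ω k)
      atTop (𝓝 (xbar k)) := ae_all_iff.mpr ha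
  have H2 : ∀ᵐ ω ∂P, ∀ k, IsBoundedUnder (· ≤ ·) atTop
      (fun (i : ℕ) => (1 / (i : ℝ)) * ∑ j ∈ Finset.Icc 1 i, |x j ω k|) := ae_all_iff.mpr hb
  have H3 : ∀ᵐ ω ∂P, ∀ k (i0 : ℕ),
      Tendsto (fun (i : ℕ) => (1 / (i : ℝ)) * ∑ j ∈ Finset.Icc (i - i0) i, |x j ω k|)
        atTop (𝓝 0) := ae_all_iff.mpr fun k => ae_all_iff.mpr (habs k)
  filter_upwards [H1, H2, H3] with ω h1 h2 h3
  -- deterministic endgame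
  -- the initial-condition term
  have hG : Tendsto (fun (i : ℕ) => (1 / (i : ℝ)) * ∑ k, (A ^ i) k l * y0 k) atTop (𝓝 0) := by
    have hg : Tendsto (fun (i : ℕ) => (1 / (i : ℝ)) * ∑ k, |y0 k|) atTop (𝓝 0) := by
      have := tendsto_one_div_atTop_nhds_zero_nat.mul_const (∑ k, |y0 k|)
      simpa using this
    refine squeeze_zero_norm (fun i => ?_) hg
    ·
      rw [Real.norm_eq_abs, abs_mul, abs_of_nonneg (by positivity : (0:ℝ) ≤ 1 / (i:ℝ))]
      gcongr
      calc |∑ k, (A ^ i) k l * y0 k| ≤ ∑ k, |(A ^ i) k l * y0 k| :=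
            Finset.abs_sum_le_sum_abs _ _
        _ ≤ ∑ k, |y0 k| := by
            refine Finset.sum_le_sum fun k _ => ?_
            rw [abs_mul, abs_of_nonneg (hpow_nonneg i k l)]
            nlinarith [abs_nonneg (y0 k), hpow_le_one i k l, hpow_nonneg i k l]
  -- the main terms
  have hF : ∀ k, Tendsto
      (fun (i : ℕ) => (1 / (i : ℝ)) * ∑ j ∈ Finset.Icc 1 i, (A ^ (i - j)) k l * x j ω k)
      atTop (𝓝 (v k * xbar k)) := by
    intro k
    have hE : Tendsto
        (fun (i : ℕ) => (1 / (i : ℝ)) * ∑ j ∈ Finset.Icc 1 i, ((A ^ (i - j)) k l - v k) * x j ω k)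
        atTop (𝓝 0) := by
      rw [NormedAddCommGroup.tendsto_nhds_zero]
      intro ε hε
      obtain ⟨C, hC⟩ := h2 k
      rw [Filter.eventually_map] at hC
      set C' : ℝ := max C 0 with hC'def
      have hC'0 : 0 ≤ C' := le_max_right _ _
      set ε' : ℝ := ε / (2 * (C' + 1)) with hε'def
      have hε' : 0 < ε' := by positivity
      obtain ⟨i0, hi0⟩ := Metric.tendsto_atTop.mp (hentry k l) ε' hε'
      have htail := h3 k i0
      have htail' := htail.eventually_lt_const (show (0:ℝ) < ε / 8 by positivity)
      filter_upwards [hC, htail', eventually_ge_atTop (i0 + 1)] with i hCi hti hii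
      have hinn : (0:ℝ) ≤ 1 / (i:ℝ) := by positivity
      -- termwise bound
      have hterm : ∀ j ∈ Finset.Icc 1 i, |((A ^ (i - j)) k l - v k) * x j ω k|
          ≤ ε' * |x j ω k| + (if i - i0 < j then 2 * |x j ω k| else 0) := by
        intro j hj
        rw [abs_mul]
        rcases Finset.mem_Icc.mp hj with ⟨hj1, hj2⟩
        by_cases hcase : i - i0 < j
        · simp only [hcase, if_true]
          have hco : |(A ^ (i - j)) k l - v k| ≤ 2 := by
            have hA1 : |(A ^ (i - j)) k l| ≤ 1 := by
              rw [abs_of_nonneg (hpow_nonneg _ k l)]; exact hpow_le_one _ k l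
            have hvk : |v k| ≤ 1 := by
              rw [abs_of_nonneg (hv_pos k).le]; exact hv_le_one k
            calc |(A ^ (i - j)) k l - v k| ≤ |(A ^ (i - j)) k l| + |v k| := abs_sub _ _
              _ ≤ 2 := by linarith
          nlinarith [abs_nonneg (x j ω k),
            mul_le_mul_of_nonneg_right hco (abs_nonneg (x j ω k)), hε'.le,
            mul_nonneg hε'.le (abs_nonneg (x j ω k))]
        · simp only [hcase, if_false, add_zero]
          have hij : i0 ≤ i - j := by omega
          have hd := hi0 (i - j) hij
          rw [Real.dist_eq] at hd
          exact mul_le_mul_of_nonneg_right hd.le (abs_nonneg _)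
      -- assemble
      have hsplit : ∑ j ∈ Finset.Icc 1 i, (ε' * |x j ω k| + (if i - i0 < j then 2 * |x j ω k| else 0))
          = ε' * (∑ j ∈ Finset.Icc 1 i, |x j ω k|)
            + ∑ j ∈ (Finset.Icc 1 i).filter (fun j => i - i0 < j), 2 * |x j ω k| := by
        rw [Finset.sum_add_distrib, ← Finset.mul_sum, Finset.sum_filter]
      have hsub : (Finset.Icc 1 i).filter (fun j => i - i0 < j) ⊆ Finset.Icc (i - i0) i := by
        intro j hj
        rcases Finset.mem_filter.mp hj with ⟨hj1, hj2⟩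
        rcases Finset.mem_Icc.mp hj1 with ⟨_, _⟩
        exact Finset.mem_Icc.mpr ⟨by omega, by omega⟩
      have hfil : ∑ j ∈ (Finset.Icc 1 i).filter (fun j => i - i0 < j), 2 * |x j ω k|
          ≤ 2 * ∑ j ∈ Finset.Icc (i - i0) i, |x j ω k| := by
        rw [Finset.mul_sum]
        exact Finset.sum_le_sum_of_subset_of_nonneg hsub
          (fun j _ _ => by positivity)
      have habs' : |∑ j ∈ Finset.Icc 1 i, ((A ^ (i - j)) k l - v k) * x j ω k|
          ≤ ε' * (∑ j ∈ Finset.Icc 1 i, |x j ω k|)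
            + 2 * ∑ j ∈ Finset.Icc (i - i0) i, |x j ω k| := by
        calc |∑ j ∈ Finset.Icc 1 i, ((A ^ (i - j)) k l - v k) * x j ω k|
            ≤ ∑ j ∈ Finset.Icc 1 i, |((A ^ (i - j)) k l - v k) * x j ω k| :=
              Finset.abs_sum_le_sum_abs _ _
          _ ≤ ∑ j ∈ Finset.Icc 1 i, (ε' * |x j ω k| + (if i - i0 < j then 2 * |x j ω k| else 0)) :=
              Finset.sum_le_sum hterm
          _ = _ := hsplit
          _ ≤ _ := by linarith [hfil]
      rw [Real.norm_eq_abs, abs_mul, abs_of_nonneg hinn]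
      have hB : (1 / (i:ℝ)) * (∑ j ∈ Finset.Icc 1 i, |x j ω k|) ≤ C' := le_trans hCi (le_max_left _ _)
      have hBnn : 0 ≤ (1 / (i:ℝ)) * (∑ j ∈ Finset.Icc 1 i, |x j ω k|) := by
        apply mul_nonneg hinn
        exact Finset.sum_nonneg fun j _ => abs_nonneg _
      have hT : (1 / (i:ℝ)) * (∑ j ∈ Finset.Icc (i - i0) i, |x j ω k|) < ε / 8 := hti
      have hεC : ε' * C' ≤ ε / 2 := by
        rw [hε'def]
        rw [div_mul_eq_mul_div, div_le_div_iff₀ (by positivity) (by norm_num)]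
        nlinarith
      calc (1 / (i:ℝ)) * |∑ j ∈ Finset.Icc 1 i, ((A ^ (i - j)) k l - v k) * x j ω k|
          ≤ (1 / (i:ℝ)) * (ε' * (∑ j ∈ Finset.Icc 1 i, |x j ω k|)
              + 2 * ∑ j ∈ Finset.Icc (i - i0) i, |x j ω k|) := by
            exact mul_le_mul_of_nonneg_left habs' hinn
        _ = ε' * ((1 / (i:ℝ)) * (∑ j ∈ Finset.Icc 1 i, |x j ω k|))
              + 2 * ((1 / (i:ℝ)) * (∑ j ∈ Finset.Icc (i - i0) i, |x j ω k|)) := by ring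
        _ < ε := by
            have : ε' * ((1 / (i:ℝ)) * (∑ j ∈ Finset.Icc 1 i, |x j ω k|)) ≤ ε' * C' :=
              mul_le_mul_of_nonneg_left hB hε'.le
            nlinarith
    have hkey : ∀ (i : ℕ), (1 / (i : ℝ)) * ∑ j ∈ Finset.Icc 1 i, (A ^ (i - j)) k l * x j ω k
        = v k * ((1 / (i : ℝ)) * ∑ j ∈ Finset.Icc 1 i, x j ω k)
          + (1 / (i : ℝ)) * ∑ j ∈ Finset.Icc 1 i, ((A ^ (i - j)) k l - v k) * x j ω k := by
      intro i
      have : ∑ j ∈ Finset.Icc 1 i, (A ^ (i - j)) k l * x j ω k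
          = (∑ j ∈ Finset.Icc 1 i, v k * x j ω k)
            + ∑ j ∈ Finset.Icc 1 i, ((A ^ (i - j)) k l - v k) * x j ω k := by
        rw [← Finset.sum_add_distrib]
        exact Finset.sum_congr rfl fun j _ => by ring
      rw [this, ← Finset.mul_sum]
      ring
    have := ((h1 k).const_mul (v k)).add hE
    rw [add_zero] at this
    exact this.congr fun i => (hkey i).symm
  have hlim := hG.add (tendsto_finset_sum Finset.univ (fun k _ => hF k))
  rw [zero_add] at hlim
  have hrepr : ∀ (i : ℕ), y i ω l / (i : ℝ) =
      (1 / (i : ℝ)) * ∑ k, (A ^ i) k l * y0 k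
        + ∑ k, (1 / (i : ℝ)) * ∑ j ∈ Finset.Icc 1 i, (A ^ (i - j)) k l * x j ω k := by
    intro i
    rw [hcomp i ω l, Finset.sum_comm, add_div]
    congr 1
    · rw [div_eq_inv_mul, ← one_div]
    · rw [Finset.sum_div]
      refine Finset.sum_congr rfl fun k _ => ?_
      rw [div_eq_inv_mul, ← one_div]
  exact Tendsto.congr (fun i => (hrepr i).symm) hlim
end
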